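/- There exist 4×4 density matrices ρ and σ such that: (i) some quantum operation Φ with Φ∘Δ = Δ∘Φ (a DIO) satisfies Φ(ρ) = σ; and (ii) no incoherent operation maps ρ to σ, i.e. for every quantum operation Ψ admitting a Kraus decomposition (K_m) in which each K_m satisfies that K_m δ K_m† is diagonal for every diagonal density matrix δ, one has Ψ(ρ) ≠ σ. Hence there is a state transformation achievable by DIO but not by IO. -/

import Mathlib

open Matrix BigOperators ComplexOrder

/-- The l1-coherence of a matrix: the sum of the absolute values of its
off-diagonal entries. -/
noncomputable def Cl1 {n : ℕ} (A : Matrix (Fin n) (Fin n) ℂ) : ℝ :=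
  ∑ i, ∑ j, if i ≠ j then ‖A i j‖ else 0

/-- A density matrix: positive semidefinite with trace 1. -/
def IsDensity {n : ℕ} (ρ : Matrix (Fin n) (Fin n) ℂ) : Prop :=
  ρ.PosSemidef ∧ ρ.trace = 1

/-- A quantum operation (CPTP map) given by a finite family of Kraus operators. -/
def IsQuantumOp {n : ℕ} (Φ : Matrix (Fin n) (Fin n) ℂ → Matrix (Fin n) (Fin n) ℂ) : Prop :=
  ∃ (m : ℕ) (K : Fin m → Matrix (Fin n) (Fin n) ℂ),
    (∑ i, (K i)ᴴ * K i) = 1 ∧ ∀ ρ, Φ ρ = ∑ i, K i * ρ * (K i)ᴴ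

/-- The dephasing map `Δ`, keeping only the diagonal part of a matrix. -/
def Deph {n : ℕ} (A : Matrix (Fin n) (Fin n) ℂ) : Matrix (Fin n) (Fin n) ℂ :=
  Matrix.of fun i j => if i = j then A i j else 0

/-- An incoherent operation (IO): a quantum operation admitting a Kraus
decomposition each of whose Kraus operators maps diagonal density matrices to
diagonal matrices. -/
def IsIO {n : ℕ} (Ψ : Matrix (Fin n) (Fin n) ℂ → Matrix (Fin n) (Fin n) ℂ) : Prop :=
  ∃ (m : ℕ) (K : Fin m → Matrix (Fin n) (Fin n) ℂ),
    (∑ i, (K i)ᴴ * K i) = 1 ∧ (∀ ρ, Ψ ρ = ∑ i, K i * ρ * (K i)ᴴ) ∧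
    ∀ i, ∀ δ : Matrix (Fin n) (Fin n) ℂ, IsDensity δ → δ.IsDiag →
      (K i * δ * (K i)ᴴ).IsDiag

/-! An incoherent Kraus operator has at most one nonzero entry in each column (test it on the
diagonal pure states), so it moves each off-diagonal entry `ρ j l` to at most one off-diagonal
position, scaled by a product of two column entries. Summed over the Kraus index these products
are at most `1` by Cauchy–Schwarz, since trace preservation makes every column of the stacked
Kraus operators a unit vector; hence `Cl1` does not increase under IO. The two Kraus operators
below form a DIO taking a maximally coherent qubit state `ρ`, with `Cl1 ρ = 1`, to a state `σ`
with `Cl1 σ = 171 / 125`. -/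

open Finset

section Kraus

variable {n : ℕ} {ι : Type*} [Fintype ι]

lemma mul_mul_conjTranspose_apply (K A : Matrix (Fin n) (Fin n) ℂ) (i k : Fin n) :
    (K * A * Kᴴ) i k = ∑ j, ∑ l, K i j * A j l * star (K k l) := by
  simp only [mul_apply, conjTranspose_apply, sum_mul]
  exact sum_comm

noncomputable def krausMap (K : ι → Matrix (Fin n) (Fin n) ℂ) (A : Matrix (Fin n) (Fin n) ℂ) :
    Matrix (Fin n) (Fin n) ℂ :=
  ∑ m, K m * A * (K m)ᴴ

lemma krausMap_apply (K : ι → Matrix (Fin n) (Fin n) ℂ) (A : Matrix (Fin n) (Fin n) ℂ)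
    (i k : Fin n) :
    krausMap K A i k = ∑ j, ∑ l, A j l * ∑ m, K m i j * star (K m k l) := by
  simp only [krausMap, Matrix.sum_apply, mul_mul_conjTranspose_apply, mul_sum]
  rw [sum_comm]
  refine sum_congr rfl fun j _ => ?_
  rw [sum_comm]
  exact sum_congr rfl fun l _ => sum_congr rfl fun m _ => by ring

lemma IsDensity.krausMap {K : ι → Matrix (Fin n) (Fin n) ℂ} (hTP : ∑ m, (K m)ᴴ * K m = 1)
    {ρ : Matrix (Fin n) (Fin n) ℂ} (hρ : IsDensity ρ) : IsDensity (krausMap K ρ) := by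
  refine ⟨posSemidef_sum _ fun m _ => hρ.1.mul_mul_conjTranspose_same (K m), ?_⟩
  rw [_root_.krausMap, trace_sum]
  simp_rw [trace_mul_cycle (K _), ← trace_sum, ← Finset.sum_mul, hTP, one_mul, hρ.2]

/-- `hrow` says that `krausMap K` sends each matrix unit `E j l` with `j ≠ l` to a matrix with
zero diagonal, and `hcol` that it sends each `E j j` to a diagonal matrix. -/
lemma krausMap_deph_comm {K : ι → Matrix (Fin n) (Fin n) ℂ}
    (hrow : ∀ i j l, j ≠ l → ∑ m, K m i j * star (K m i l) = 0)
    (hcol : ∀ i k j, i ≠ k → ∑ m, K m i j * star (K m k j) = 0)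
    (A : Matrix (Fin n) (Fin n) ℂ) :
    krausMap K (Deph A) = Deph (krausMap K A) := by
  ext i k
  simp only [krausMap_apply, Deph, of_apply, ite_mul, zero_mul, Finset.sum_ite_eq,
    Finset.mem_univ, if_true]
  split_ifs with hik
  · subst hik
    refine sum_congr rfl fun j _ => ?_
    rw [sum_eq_single j (fun l _ hlj => by rw [hrow i j l (Ne.symm hlj), mul_zero]) (by simp)]
  · exact Finset.sum_eq_zero fun j _ => by rw [hcol i k j hik, mul_zero]

lemma Cl1_sum_le (X : ι → Matrix (Fin n) (Fin n) ℂ) : Cl1 (∑ m, X m) ≤ ∑ m, Cl1 (X m) := by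
  calc Cl1 (∑ m, X m)
      ≤ ∑ i, ∑ j, ∑ m, if i ≠ j then ‖X m i j‖ else 0 := by
        refine sum_le_sum fun i _ => sum_le_sum fun j _ => ?_
        split_ifs
        · simpa only [Matrix.sum_apply] using norm_sum_le univ fun m => X m i j
        · exact sum_const_zero.ge
    _ = ∑ m, Cl1 (X m) := by
        simp only [Cl1]
        exact (sum_congr rfl fun _ _ => sum_comm).trans sum_comm

end Kraus

section ColumnSupport

variable {n : ℕ} {K : Matrix (Fin n) (Fin n) ℂ} {f : Fin n → Fin n}

lemma sum_col_eq_of_colSupport {M : Type*} [AddCommMonoid M] (hf : ∀ i j, K i j ≠ 0 → i = f j)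
    (g : ℂ → M) (hg : g 0 = 0) (j : Fin n) : ∑ i, g (K i j) = g (K (f j) j) :=
  sum_eq_single (f j) (fun i _ hi => by rw [not_imp_comm.mp (hf i j) hi, hg]) (by simp)

lemma sum_offDiag_norm_mul_le (hf : ∀ i j, K i j ≠ 0 → i = f j) (j l : Fin n) :
    ∑ i, ∑ k, (if i ≠ k then ‖K i j‖ * ‖K k l‖ else 0) ≤
      if j ≠ l then ‖K (f j) j‖ * ‖K (f l) l‖ else 0 := by
  split_ifs with hjl
  · calc _ ≤ ∑ i, ∑ k, ‖K i j‖ * ‖K k l‖ := by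
          gcongr with i _ k _
          split_ifs
          exacts [le_rfl, by positivity]
      _ = ‖K (f j) j‖ * ‖K (f l) l‖ := by
          rw [← sum_mul_sum, sum_col_eq_of_colSupport hf _ norm_zero,
            sum_col_eq_of_colSupport hf _ norm_zero]
  · obtain rfl : j = l := not_ne_iff.mp hjl
    refine (sum_eq_zero fun i _ => sum_eq_zero fun k _ => ?_).le
    split_ifs with hik
    · by_contra h
      obtain ⟨hi, hk⟩ : K i j ≠ 0 ∧ K k j ≠ 0 := by simpa using h
      exact hik ((hf i j hi).trans (hf k j hk).symm)
    · rfl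

lemma Cl1_mul_mul_conjTranspose_le (hf : ∀ i j, K i j ≠ 0 → i = f j)
    (ρ : Matrix (Fin n) (Fin n) ℂ) :
    Cl1 (K * ρ * Kᴴ) ≤
      ∑ j, ∑ l, (if j ≠ l then ‖K (f j) j‖ * ‖K (f l) l‖ else 0) * ‖ρ j l‖ := by
  calc Cl1 (K * ρ * Kᴴ)
      ≤ ∑ i, ∑ k, ∑ j, ∑ l, (if i ≠ k then ‖K i j‖ * ‖K k l‖ else 0) * ‖ρ j l‖ := by
        refine sum_le_sum fun i _ => sum_le_sum fun k _ => ?_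
        split_ifs
        · rw [mul_mul_conjTranspose_apply]
          refine (norm_sum_le _ _).trans (sum_le_sum fun j _ => ?_)
          refine (norm_sum_le _ _).trans (sum_le_sum fun l _ => ?_)
          simp only [norm_mul, norm_star]
          exact (mul_right_comm _ _ _).le
        · simp
    _ = ∑ j, ∑ l, (∑ i, ∑ k, if i ≠ k then ‖K i j‖ * ‖K k l‖ else 0) * ‖ρ j l‖ := by
        simp only [sum_mul, ← Fintype.sum_prod_type']
        exact Fintype.sum_equiv ((Equiv.prodAssoc _ _ _).symm.trans
          ((Equiv.prodComm _ _).trans (Equiv.prodAssoc _ _ _))) _ _ fun _ => rfl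
    _ ≤ _ := by
        gcongr with j _ l _
        exact sum_offDiag_norm_mul_le hf j l

end ColumnSupport

section Monotonicity

variable {n : ℕ} {ι : Type*} [Fintype ι] {K : ι → Matrix (Fin n) (Fin n) ℂ}

lemma sum_sum_norm_sq_eq_one (hTP : ∑ m, (K m)ᴴ * K m = 1) (j : Fin n) :
    ∑ m, ∑ i, ‖K m i j‖ ^ 2 = 1 := by
  have h := congrFun (congrFun hTP j) j
  simp only [Matrix.sum_apply, mul_apply, conjTranspose_apply, one_apply_eq,
    ← starRingEnd_apply, Complex.conj_mul'] at h
  exact_mod_cast h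

lemma sum_mul_le_one_of_sum_sq_eq_one {a b : ι → ℝ} (ha : ∑ m, a m ^ 2 = 1)
    (hb : ∑ m, b m ^ 2 = 1) : ∑ m, a m * b m ≤ 1 := by
  have h := sum_mul_sq_le_sq_mul_sq univ a b
  rw [ha, hb, one_mul] at h
  nlinarith

theorem Cl1_krausMap_le (hTP : ∑ m, (K m)ᴴ * K m = 1) (f : ι → Fin n → Fin n)
    (hf : ∀ m i j, K m i j ≠ 0 → i = f m j) (ρ : Matrix (Fin n) (Fin n) ℂ) :
    Cl1 (krausMap K ρ) ≤ Cl1 ρ := by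
  have hcol : ∀ j, ∑ m, ‖K m (f m j) j‖ ^ 2 = 1 := fun j => by
    rw [← sum_sum_norm_sq_eq_one hTP j]
    exact sum_congr rfl fun m _ => (sum_col_eq_of_colSupport (hf m) (‖·‖ ^ 2) (by simp) j).symm
  calc Cl1 (krausMap K ρ) ≤ ∑ m, Cl1 (K m * ρ * (K m)ᴴ) := Cl1_sum_le _
    _ ≤ ∑ m, ∑ j, ∑ l,
          (if j ≠ l then ‖K m (f m j) j‖ * ‖K m (f m l) l‖ else 0) * ‖ρ j l‖ :=
        sum_le_sum fun m _ => Cl1_mul_mul_conjTranspose_le (hf m) ρ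
    _ = ∑ j, ∑ l,
          (if j ≠ l then ∑ m, ‖K m (f m j) j‖ * ‖K m (f m l) l‖ else 0) * ‖ρ j l‖ := by
        rw [sum_comm]
        refine sum_congr rfl fun j _ => ?_
        rw [sum_comm]
        refine sum_congr rfl fun l _ => ?_
        rw [← sum_mul]
        split_ifs <;> simp
    _ ≤ ∑ j, ∑ l, if j ≠ l then ‖ρ j l‖ else 0 := by
        refine sum_le_sum fun j _ => sum_le_sum fun l _ => ?_
        split_ifs
        · exact mul_le_of_le_one_left (norm_nonneg _)
            (sum_mul_le_one_of_sum_sq_eq_one (hcol j) (hcol l))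
        · simp
    _ = Cl1 ρ := rfl

end Monotonicity

section Incoherent

variable {n : ℕ}

def IsIncoherentKraus (K : Matrix (Fin n) (Fin n) ℂ) : Prop :=
  ∀ δ : Matrix (Fin n) (Fin n) ℂ, IsDensity δ → δ.IsDiag → (K * δ * Kᴴ).IsDiag

lemma isDensity_diagonal_single (j : Fin n) : IsDensity (diagonal (Pi.single j 1)) := by
  refine ⟨posSemidef_diagonal_iff.mpr fun i => ?_, by simp [trace_diagonal]⟩
  rcases eq_or_ne i j with rfl | hij
  · simp
  · simp [hij]

lemma IsIncoherentKraus.eq_of_ne_zero {K : Matrix (Fin n) (Fin n) ℂ} (hK : IsIncoherentKraus K)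
    {i k j : Fin n} (hi : K i j ≠ 0) (hk : K k j ≠ 0) : i = k := by
  by_contra hik
  have h := hK _ (isDensity_diagonal_single j) (isDiag_diagonal _) hik
  simp [mul_mul_conjTranspose_apply, diagonal_apply, Pi.single_apply] at h
  exact h.elim hi hk

lemma IsIncoherentKraus.exists_colSupport {K : Matrix (Fin n) (Fin n) ℂ}
    (hK : IsIncoherentKraus K) : ∃ f : Fin n → Fin n, ∀ i j, K i j ≠ 0 → i = f j := by
  have hcol : ∀ j, ∃ r, ∀ i, K i j ≠ 0 → i = r := fun j => by
    by_cases h : ∃ k, K k j ≠ 0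
    · obtain ⟨k, hk⟩ := h
      exact ⟨k, fun i hi => hK.eq_of_ne_zero hi hk⟩
    · exact ⟨j, fun i hi => (h ⟨i, hi⟩).elim⟩
  choose f hf using hcol
  exact ⟨f, fun i j => hf j i⟩

theorem Cl1_le_of_isIO {Ψ : Matrix (Fin n) (Fin n) ℂ → Matrix (Fin n) (Fin n) ℂ} (hΨ : IsIO Ψ)
    (ρ : Matrix (Fin n) (Fin n) ℂ) : Cl1 (Ψ ρ) ≤ Cl1 ρ := by
  obtain ⟨m, K, hTP, hΨK, hK⟩ := hΨ
  choose f hf using fun m => IsIncoherentKraus.exists_colSupport (hK m)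
  rw [hΨK]
  exact Cl1_krausMap_le hTP f hf ρ

end Incoherent

namespace DIOExample

noncomputable def K₁ : Matrix (Fin 4) (Fin 4) ℂ :=
  !![3/5, 0, 0, 0; 0, 16/25, 0, -9/25; 0, 0, 3/5, 0; 0, -9/25, 0, 16/25]

noncomputable def K₂ : Matrix (Fin 4) (Fin 4) ℂ :=
  !![0, 0, 4/5, 0; 0, 12/25, 0, 12/25; 4/5, 0, 0, 0; 0, 12/25, 0, 12/25]

noncomputable def kraus : Fin 2 → Matrix (Fin 4) (Fin 4) ℂ := ![K₁, K₂]

noncomputable def rho : Matrix (Fin 4) (Fin 4) ℂ :=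
  !![1/2, 1/2, 0, 0; 1/2, 1/2, 0, 0; 0, 0, 0, 0; 0, 0, 0, 0]

noncomputable def sigma : Matrix (Fin 4) (Fin 4) ℂ :=
  !![9/50, 24/125, 0, -27/250;
     24/125, 8/25, 24/125, 0;
     0, 24/125, 8/25, 24/125;
     -27/250, 0, 24/125, 9/50]

lemma sum_kraus_mul_star_same_row_eq_zero (i j l : Fin 4) (hjl : j ≠ l) :
    ∑ m, kraus m i j * star (kraus m i l) = 0 := by
  fin_cases i <;> fin_cases j <;> fin_cases l <;>
    simp_all [kraus, K₁, K₂, Fin.sum_univ_two, map_ofNat] <;> norm_num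

lemma sum_kraus_mul_star_same_col_eq_zero (i k j : Fin 4) (hik : i ≠ k) :
    ∑ m, kraus m i j * star (kraus m k j) = 0 := by
  fin_cases i <;> fin_cases k <;> fin_cases j <;>
    simp_all [kraus, K₁, K₂, Fin.sum_univ_two, map_ofNat] <;> norm_num

lemma sum_conjTranspose_kraus_mul_kraus : ∑ m, (kraus m)ᴴ * kraus m = 1 := by
  ext i j
  fin_cases i <;> fin_cases j <;>
    simp [kraus, K₁, K₂, Fin.sum_univ_two, Fin.sum_univ_four, mul_apply, one_apply,
      map_ofNat] <;> norm_num

lemma krausMap_rho : krausMap kraus rho = sigma := by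
  ext i j
  fin_cases i <;> fin_cases j <;>
    simp [krausMap_apply, kraus, K₁, K₂, rho, sigma, Fin.sum_univ_two, Fin.sum_univ_four,
      map_ofNat] <;> norm_num

lemma isDensity_rho : IsDensity rho := by
  refine ⟨?_, by simp [rho, trace, Fin.sum_univ_four]; norm_num⟩
  have h : rho = rhoᴴ * rho := by
    ext i j
    fin_cases i <;> fin_cases j <;>
      simp [rho, mul_apply, Fin.sum_univ_four, map_ofNat] <;> norm_num
  rw [h]
  exact posSemidef_conjTranspose_mul_self rho

lemma Cl1_rho : Cl1 rho = 1 := by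
  simp [Cl1, rho, Fin.sum_univ_four]
  norm_num

lemma Cl1_sigma : Cl1 sigma = 171 / 125 := by
  simp [Cl1, sigma, Fin.sum_univ_four]
  norm_num

lemma isDensity_sigma : IsDensity sigma :=
  krausMap_rho ▸ isDensity_rho.krausMap sum_conjTranspose_kraus_mul_kraus

end DIOExample

theorem DIO_state_transformation_not_IO :
    ∃ ρ σ : Matrix (Fin 4) (Fin 4) ℂ, IsDensity ρ ∧ IsDensity σ ∧
      (∃ Φ : Matrix (Fin 4) (Fin 4) ℂ → Matrix (Fin 4) (Fin 4) ℂ,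
        IsQuantumOp Φ ∧ (∀ A, Φ (Deph A) = Deph (Φ A)) ∧ Φ ρ = σ) ∧
      (∀ Ψ : Matrix (Fin 4) (Fin 4) ℂ → Matrix (Fin 4) (Fin 4) ℂ,
        IsIO Ψ → Ψ ρ ≠ σ) := by
  open DIOExample in
  exact ⟨rho, sigma, isDensity_rho, isDensity_sigma,
    ⟨krausMap kraus, ⟨2, kraus, sum_conjTranspose_kraus_mul_kraus, fun _ => rfl⟩,
      krausMap_deph_comm sum_kraus_mul_star_same_row_eq_zero
        sum_kraus_mul_star_same_col_eq_zero,
      krausMap_rho⟩,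
    fun Ψ hΨ hΨρ => by
      have hmono := Cl1_le_of_isIO hΨ rho
      rw [hΨρ, Cl1_rho, Cl1_sigma] at hmono
      norm_num at hmono⟩
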